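/- arXiv:2501.15435 — 2 statements merged into one kernel-verified Lean document; each statement's English description precedes it below -/
import Mathlib

section
/- Goldreich–Levin estimation theorem: let I ⊆ {1,…,n}, J = {1,…,n} \ I, S ⊆ I, and let f : {-1,1}^n → [-1,1]. Define W : {-1,1}^J × {-1,1}^I × {-1,1}^I → ℝ by W(z, y, y') = f(y, z)·f(y', z)·(∏_{i∈S} y_i)·(∏_{i∈S} y'_i), where (y, z) denotes the cube point with I-coordinates y and J-coordinates z. Then (i) |W| ≤ 1 everywhere; (ii) if Z is uniform on {-1,1}^J and Y, Y' are uniform on {-1,1}^I, all independent, then E[W(Z, Y, Y')] = Σ_{T ⊆ J} f̂(S ∪ T)²; and (iii) for any η > 0, δ ∈ (0,1), if (Z_k, Y_k, Y'_k), k = 1,…,m, are i.i.d. copies of (Z, Y, Y') with m ≥ (2/η²)·ln(2/δ), then the probability that |m^{-1} Σ_{k=1}^m W(Z_k, Y_k, Y'_k) − Σ_{T ⊆ J} f̂(S ∪ T)²| ≥ η is at most δ. -/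
open Finset

/-- The sign encoding of a Boolean value: `true ↦ 1`, `false ↦ -1`,
so `Fin n → Bool` encodes the Boolean cube `{-1,1}^n`. -/
noncomputable def sgn (b : Bool) : ℝ := if b then 1 else -1

/-- The parity function `χ_S(x) = ∏_{i ∈ S} x_i` on the Boolean cube. -/
noncomputable def chi {n : ℕ} (S : Finset (Fin n)) (x : Fin n → Bool) : ℝ :=
  ∏ i ∈ S, sgn (x i)

/-- The Fourier coefficient `f̂(S) = 2^{-n} Σ_{x ∈ {-1,1}^n} f(x)·χ_S(x)`. -/
noncomputable def pbFourier {n : ℕ} (f : (Fin n → Bool) → ℝ) (S : Finset (Fin n)) : ℝ :=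
  ((2 : ℝ) ^ n)⁻¹ * ∑ x : Fin n → Bool, f x * chi S x

open scoped Classical

/-- Combine an assignment `y` of the coordinates in `I` with an assignment `z` of the
coordinates in the complement `J = Iᶜ` into a full cube point `(y, z)`. -/
def combine {n : ℕ} (I : Finset (Fin n)) (y : {i // i ∈ I} → Bool)
    (z : {i // i ∈ Iᶜ} → Bool) : Fin n → Bool :=
  fun i => if h : i ∈ I then y ⟨i, h⟩ else z ⟨i, Finset.mem_compl.mpr h⟩


lemma GL_mgf {α : Type*} [Fintype α] [Nonempty α] (g : α → ℝ)
    (hg : ∀ a, g a ^ 2 ≤ 1) {t : ℝ} (ht : 0 ≤ t) :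
    ∑ a, Real.exp (t * g a) ≤
      (Fintype.card α : ℝ) *
        Real.exp (t * ((Fintype.card α : ℝ)⁻¹ * ∑ a, g a) + t ^ 2 / 2) := by
  have hN : (0 : ℝ) < (Fintype.card α : ℝ) := by positivity
  set N : ℝ := (Fintype.card α : ℝ) with hNdef
  set μ : ℝ := N⁻¹ * ∑ a, g a with hμdef
  set D : ℝ → ℝ := fun s => ∑ a, Real.exp (s * g a) with hDdef
  set E : ℝ → ℝ := fun s => ∑ a, g a * Real.exp (s * g a) with hEdef
  set F : ℝ → ℝ := fun s => ∑ a, g a ^ 2 * Real.exp (s * g a) with hFdef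
  have hDpos : ∀ s, 0 < D s := fun s =>
    Finset.sum_pos (fun a _ => Real.exp_pos _) univ_nonempty
  have hD : ∀ s, HasDerivAt D (E s) s := by
    intro s
    have : HasDerivAt D (∑ a, Real.exp (s * g a) * g a) s := by
      apply HasDerivAt.fun_sum
      intro a _
      exact (hasDerivAt_mul_const (g a)).exp
    convert this using 1
    exact Finset.sum_congr rfl fun a _ => mul_comm _ _
  have hE : ∀ s, HasDerivAt E (F s) s := by
    intro s
    have : HasDerivAt E (∑ a, g a * (Real.exp (s * g a) * g a)) s := by
      apply HasDerivAt.fun_sum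
      intro a _
      exact ((hasDerivAt_mul_const (g a)).exp).const_mul (g a)
    convert this using 1
    refine Finset.sum_congr rfl fun a _ => by ring
  set ψ : ℝ → ℝ := fun s => μ + s - E s / D s with hψdef
  have hψd : ∀ s, HasDerivAt ψ (1 - ((F s * D s - E s * E s) / D s ^ 2)) s := by
    intro s
    have h1 : HasDerivAt (fun s : ℝ => μ + s) 1 s := (hasDerivAt_id s).const_add μ
    exact h1.sub ((hE s).div (hD s) (hDpos s).ne')
  have hFD : ∀ s, F s ≤ D s := by
    intro s
    refine Finset.sum_le_sum fun a _ => ?_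
    calc g a ^ 2 * Real.exp (s * g a) ≤ 1 * Real.exp (s * g a) := by
          exact mul_le_mul_of_nonneg_right (hg a) (Real.exp_pos _).le
      _ = Real.exp (s * g a) := one_mul _
  have hψ'nonneg : ∀ s, 0 ≤ 1 - ((F s * D s - E s * E s) / D s ^ 2) := by
    intro s
    have hD2 : (0:ℝ) < D s ^ 2 := by positivity
    have : (F s * D s - E s * E s) / D s ^ 2 ≤ 1 := by
      rw [div_le_one hD2]
      nlinarith [hFD s, hDpos s, sq_nonneg (E s)]
    linarith
  have hψmono : Monotone ψ :=
    monotone_of_hasDerivAt_nonneg hψd fun s => hψ'nonneg s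
  have hψ0 : ψ 0 = 0 := by
    have hd0 : D 0 = N := by simp [hDdef, hNdef]
    have he0 : E 0 = ∑ a, g a := by simp [hEdef]
    simp only [hψdef, hd0, he0, hμdef, add_zero]
    field_simp
    ring
  have hψnonneg : ∀ s, 0 ≤ s → 0 ≤ ψ s := fun s hs => hψ0 ▸ hψmono hs
  set φ : ℝ → ℝ := fun s => s * μ + s ^ 2 / 2 - Real.log (D s) with hφdef
  have hφd : ∀ s, HasDerivAt φ (ψ s) s := by
    intro s
    have h1 : HasDerivAt (fun s : ℝ => s * μ) μ s := hasDerivAt_mul_const μ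
    have h2 : HasDerivAt (fun s : ℝ => s ^ 2 / 2) s s := by
      have := (hasDerivAt_pow 2 s).div_const 2
      simpa using this
    have h3 : HasDerivAt (fun s => Real.log (D s)) (E s / D s) s :=
      (hD s).log (hDpos s).ne'
    exact (h1.add h2).sub h3
  have hφmono : MonotoneOn φ (Set.Ici (0:ℝ)) := by
    apply monotoneOn_of_hasDerivWithinAt_nonneg (convex_Ici 0)
      (fun s _ => ((hφd s).continuousAt).continuousWithinAt)
      (f' := ψ) (fun s _ => (hφd s).hasDerivWithinAt)
    intro s hs
    rw [interior_Ici] at hs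
    exact hψnonneg s (le_of_lt hs)
  have key : φ 0 ≤ φ t := hφmono (le_refl (0:ℝ) : (0:ℝ) ∈ Set.Ici (0:ℝ)) ht ht
  have hφ0 : φ 0 = - Real.log N := by
    have hd0 : D 0 = N := by simp [hDdef, hNdef]
    simp [hφdef, hd0]
  rw [hφ0, hφdef] at key
  have hlog : Real.log (D t) ≤ Real.log N + (t * μ + t ^ 2 / 2) := by linarith
  have := Real.exp_le_exp.mpr hlog
  rw [Real.exp_log (hDpos t)] at this
  calc D t ≤ Real.exp (Real.log N + (t * μ + t ^ 2 / 2)) := this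
    _ = N * Real.exp (t * μ + t ^ 2 / 2) := by
        rw [Real.exp_add, Real.exp_log hN]


lemma GL_chernoff {α : Type*} [Fintype α] [Nonempty α] (g : α → ℝ)
    (hg : ∀ a, g a ^ 2 ≤ 1) (m : ℕ) {η : ℝ} (hη : 0 < η) :
    ((univ.filter (fun ω : Fin m → α =>
        (m : ℝ) * ((Fintype.card α : ℝ)⁻¹ * ∑ a, g a + η) ≤ ∑ k, g (ω k))).card : ℝ)
      ≤ (Fintype.card α : ℝ) ^ m * Real.exp (-(m : ℝ) * η ^ 2 / 2) := by
  set N : ℝ := (Fintype.card α : ℝ) with hNdef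
  have hN : (0:ℝ) < N := by positivity
  set μ : ℝ := N⁻¹ * ∑ a, g a with hμdef
  set P : Finset (Fin m → α) :=
    univ.filter (fun ω : Fin m → α => (m : ℝ) * (μ + η) ≤ ∑ k, g (ω k)) with hP
  have step1 : (P.card : ℝ) ≤
      ∑ ω ∈ P, Real.exp (η * (∑ k, g (ω k)) - η * ((m:ℝ) * (μ + η))) := by
    have : (P.card : ℝ) = ∑ _ω ∈ P, (1:ℝ) := by simp
    rw [this]
    refine Finset.sum_le_sum fun ω hω => ?_
    have hmem := (Finset.mem_filter.mp hω).2
    have : (0:ℝ) ≤ η * (∑ k, g (ω k)) - η * ((m:ℝ) * (μ + η)) := by nlinarith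
    calc (1:ℝ) = Real.exp 0 := (Real.exp_zero).symm
      _ ≤ _ := Real.exp_le_exp.mpr this
  have step2 : ∑ ω ∈ P, Real.exp (η * (∑ k, g (ω k)) - η * ((m:ℝ) * (μ + η)))
      ≤ ∑ ω : Fin m → α, Real.exp (η * (∑ k, g (ω k)) - η * ((m:ℝ) * (μ + η))) :=
    Finset.sum_le_sum_of_subset_of_nonneg (Finset.filter_subset _ _)
      (fun ω _ _ => (Real.exp_pos _).le)
  have step3 : ∑ ω : Fin m → α, Real.exp (η * (∑ k, g (ω k)) - η * ((m:ℝ) * (μ + η)))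
      = Real.exp (- η * ((m:ℝ) * (μ + η))) * (∑ a, Real.exp (η * g a)) ^ m := by
    have hpow : (∑ a, Real.exp (η * g a)) ^ m
        = ∑ ω : Fin m → α, ∏ k, Real.exp (η * g (ω k)) := by
      calc (∑ a, Real.exp (η * g a)) ^ m
          = ∏ _k : Fin m, (∑ a, Real.exp (η * g a)) := by simp [Finset.prod_const]
        _ = ∑ ω ∈ Fintype.piFinset (fun _ : Fin m => (univ : Finset α)),
              ∏ k, Real.exp (η * g (ω k)) := Finset.prod_univ_sum _ _
        _ = ∑ ω : Fin m → α, ∏ k, Real.exp (η * g (ω k)) := by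
              rw [Fintype.piFinset_univ]
    rw [hpow, Finset.mul_sum]
    refine Finset.sum_congr rfl fun ω _ => ?_
    rw [← Real.exp_sum, ← Real.exp_add]
    congr 1
    rw [Finset.mul_sum]
    ring
  have hmgf := GL_mgf g hg hη.le
  have step4 : (∑ a, Real.exp (η * g a)) ^ m
      ≤ (N * Real.exp (η * μ + η ^ 2 / 2)) ^ m := by
    apply pow_le_pow_left₀ (Finset.sum_nonneg fun a _ => (Real.exp_pos _).le)
    exact hmgf
  have hfin : Real.exp (- η * ((m:ℝ) * (μ + η))) * (N * Real.exp (η * μ + η ^ 2 / 2)) ^ m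
      = N ^ m * Real.exp (-(m : ℝ) * η ^ 2 / 2) := by
    rw [mul_pow, ← Real.exp_nat_mul]
    rw [mul_comm (Real.exp _) _, mul_assoc, ← Real.exp_add]
    congr 1
    ring
  calc (P.card : ℝ) ≤ _ := step1
    _ ≤ _ := step2
    _ = _ := step3
    _ ≤ Real.exp (- η * ((m:ℝ) * (μ + η))) * (N * Real.exp (η * μ + η ^ 2 / 2)) ^ m := by
        exact mul_le_mul_of_nonneg_left step4 (Real.exp_pos _).le
    _ = _ := hfin

lemma GL_hoeffding {α : Type*} [Fintype α] [Nonempty α] (g : α → ℝ)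
    (hg : ∀ a, g a ^ 2 ≤ 1) (m : ℕ) {η : ℝ} (hη : 0 < η) :
    ((univ.filter (fun ω : Fin m → α =>
        η ≤ |(m:ℝ)⁻¹ * ∑ k, g (ω k) - (Fintype.card α : ℝ)⁻¹ * ∑ a, g a|)).card : ℝ)
      ≤ 2 * (Fintype.card α : ℝ) ^ m * Real.exp (-(m : ℝ) * η ^ 2 / 2) := by
  set N : ℝ := (Fintype.card α : ℝ) with hNdef
  have hN : (0:ℝ) < N := by positivity
  set μ : ℝ := N⁻¹ * ∑ a, g a with hμdef
  set A : Finset (Fin m → α) :=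
    univ.filter (fun ω : Fin m → α => (m : ℝ) * (μ + η) ≤ ∑ k, g (ω k)) with hA
  set B : Finset (Fin m → α) :=
    univ.filter (fun ω : Fin m → α =>
      (m : ℝ) * ((Fintype.card α : ℝ)⁻¹ * (∑ a, (fun a => -g a) a) + η)
        ≤ ∑ k, (fun a => -g a) (ω k)) with hB
  have hsub : univ.filter (fun ω : Fin m → α =>
      η ≤ |(m:ℝ)⁻¹ * ∑ k, g (ω k) - μ|) ⊆ A ∪ B := by
    intro ω hω
    have hmem := (Finset.mem_filter.mp hω).2
    rw [Finset.mem_union]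
    have hsum : ∑ a, (fun a => -g a) a = -∑ a, g a := by simp
    rcases le_or_gt ((m:ℝ)⁻¹ * ∑ k, g (ω k) - μ) 0 with hc | hc
    · right
      rw [hB, Finset.mem_filter]
      refine ⟨Finset.mem_univ _, ?_⟩
      simp only [hsum]
      have habs : η ≤ -((m:ℝ)⁻¹ * ∑ k, g (ω k) - μ) := by
        rw [abs_of_nonpos hc] at hmem; exact hmem
      have : ∑ k, (fun a => -g a) (ω k) = -∑ k, g (ω k) := by simp
      rw [this]
      rcases Nat.eq_zero_or_pos m with hm | hm
      · subst hm; simp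
      · have hmpos : (0:ℝ) < m := by exact_mod_cast hm
        have h2 : (m:ℝ) * η ≤ (m:ℝ) * (μ - (m:ℝ)⁻¹ * ∑ k, g (ω k)) :=
          mul_le_mul_of_nonneg_left (by linarith) hmpos.le
        have h3 : (m:ℝ) * ((m:ℝ)⁻¹ * ∑ k, g (ω k)) = ∑ k, g (ω k) := by
          field_simp
        nlinarith [h2, h3]
    · left
      rw [hA, Finset.mem_filter]
      refine ⟨Finset.mem_univ _, ?_⟩
      have habs : η ≤ (m:ℝ)⁻¹ * ∑ k, g (ω k) - μ := by
        rw [abs_of_pos hc] at hmem; exact hmem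
      rcases Nat.eq_zero_or_pos m with hm | hm
      · subst hm; simp
      · have hmpos : (0:ℝ) < m := by exact_mod_cast hm
        have h2 : (m:ℝ) * η ≤ (m:ℝ) * ((m:ℝ)⁻¹ * ∑ k, g (ω k) - μ) :=
          mul_le_mul_of_nonneg_left habs hmpos.le
        have h3 : (m:ℝ) * ((m:ℝ)⁻¹ * ∑ k, g (ω k)) = ∑ k, g (ω k) := by
          field_simp
        nlinarith [h2, h3]
  have hcard : ((univ.filter (fun ω : Fin m → α =>
      η ≤ |(m:ℝ)⁻¹ * ∑ k, g (ω k) - μ|)).card : ℝ) ≤ (A.card : ℝ) + (B.card : ℝ) := by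
    have h1 := Finset.card_le_card hsub
    have h2 := Finset.card_union_le A B
    push_cast
    exact_mod_cast le_trans (Nat.cast_le.mpr h1) (by exact_mod_cast h2)
  have hA' := GL_chernoff g hg m hη
  have hB' := GL_chernoff (fun a => -g a) (fun a => by simpa using hg a) m hη
  rw [← hA] at hA'
  rw [← hB] at hB'
  calc _ ≤ (A.card : ℝ) + (B.card : ℝ) := hcard
    _ ≤ N ^ m * Real.exp (-(m : ℝ) * η ^ 2 / 2)
        + N ^ m * Real.exp (-(m : ℝ) * η ^ 2 / 2) := add_le_add hA' hB'
    _ = 2 * N ^ m * Real.exp (-(m : ℝ) * η ^ 2 / 2) := by ring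

lemma sgn_mul_self (b : Bool) : sgn b * sgn b = 1 := by cases b <;> norm_num [sgn]

lemma abs_sgn (b : Bool) : |sgn b| = 1 := by cases b <;> norm_num [sgn]

lemma combine_mem {n : ℕ} {I : Finset (Fin n)} (y : {i // i ∈ I} → Bool)
    (z : {i // i ∈ Iᶜ} → Bool) {i : Fin n} (h : i ∈ I) :
    combine I y z i = y ⟨i, h⟩ := dif_pos h

lemma combine_not_mem {n : ℕ} {I : Finset (Fin n)} (y : {i // i ∈ I} → Bool)
    (z : {i // i ∈ Iᶜ} → Bool) {i : Fin n} (h : i ∈ Iᶜ) :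
    combine I y z i = z ⟨i, h⟩ := dif_neg (Finset.mem_compl.mp h)

noncomputable def cubeEquiv {n : ℕ} (I : Finset (Fin n)) :
    (Fin n → Bool) ≃ (({i // i ∈ I} → Bool) × ({i // i ∈ Iᶜ} → Bool)) where
  toFun x := (fun i => x i.1, fun i => x i.1)
  invFun p := combine I p.1 p.2
  left_inv x := by
    funext i
    by_cases h : i ∈ I
    · exact combine_mem _ _ h
    · exact combine_not_mem _ _ (Finset.mem_compl.mpr h)
  right_inv p := by
    obtain ⟨y, z⟩ := p
    refine Prod.ext ?_ ?_
    · funext i; exact combine_mem y z i.2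
    · funext i; exact combine_not_mem y z i.2

lemma chiS_combine {n : ℕ} {I S : Finset (Fin n)} (hS : S ⊆ I)
    (y : {i // i ∈ I} → Bool) (z : {i // i ∈ Iᶜ} → Bool) :
    chi S (combine I y z) = ∏ i ∈ S.attach, sgn (y ⟨i.1, hS i.2⟩) := by
  rw [chi, ← Finset.prod_attach]
  exact Finset.prod_congr rfl fun i _ => by rw [combine_mem y z (hS i.2)]

lemma prod_delta {n : ℕ} {I : Finset (Fin n)} (z z' : {i // i ∈ Iᶜ} → Bool) :
    ∏ j ∈ Iᶜ.attach, (1 + sgn (z j) * sgn (z' j))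
      = if z = z' then (2:ℝ) ^ Iᶜ.card else 0 := by
  by_cases h : z = z'
  · subst h
    rw [if_pos rfl]
    have : ∀ j ∈ Iᶜ.attach, (1 + sgn (z j) * sgn (z j)) = (2:ℝ) := fun j _ => by
      rw [sgn_mul_self]; norm_num
    rw [Finset.prod_congr rfl this, Finset.prod_const, Finset.card_attach]
  · rw [if_neg h]
    have : ∃ j : {i // i ∈ Iᶜ}, z j ≠ z' j := by
      by_contra hc
      push_neg at hc
      exact h (funext hc)
    obtain ⟨j, hj⟩ := this
    apply Finset.prod_eq_zero (Finset.mem_attach _ j)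
    have : sgn (z j) * sgn (z' j) = -1 := by
      cases hz : z j <;> cases hz' : z' j <;> simp_all [sgn]
    rw [this]; norm_num

lemma sum_chi_union {n : ℕ} {I S : Finset (Fin n)} (hS : S ⊆ I)
    (x x' : Fin n → Bool) :
    ∑ T ∈ Iᶜ.powerset, chi (S ∪ T) x * chi (S ∪ T) x'
      = chi S x * chi S x' * ∏ j ∈ Iᶜ, (1 + sgn (x j) * sgn (x' j)) := by
  have h1 : ∀ T ∈ Iᶜ.powerset, chi (S ∪ T) x * chi (S ∪ T) x'
      = (chi S x * chi S x') * (chi T x * chi T x') := by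
    intro T hT
    have hd : Disjoint S T :=
      (@disjoint_compl_right _ _ I).mono hS (Finset.mem_powerset.mp hT)
    rw [chi, chi, Finset.prod_union hd, Finset.prod_union hd]
    show (∏ i ∈ S, sgn (x i)) * (∏ i ∈ T, sgn (x i)) *
        ((∏ i ∈ S, sgn (x' i)) * ∏ i ∈ T, sgn (x' i)) = _
    rw [chi, chi, chi, chi]; ring
  rw [Finset.sum_congr rfl h1, ← Finset.mul_sum]
  congr 1
  have h2 := Finset.prod_add (fun j => sgn (x j) * sgn (x' j)) (fun _ => (1:ℝ)) Iᶜ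
  simp only [Finset.prod_const_one, mul_one] at h2
  have h3 : ∀ j ∈ Iᶜ, (1 + sgn (x j) * sgn (x' j))
      = (sgn (x j) * sgn (x' j) + 1) := fun j _ => by ring
  rw [Finset.prod_congr rfl h3, h2]
  refine Finset.sum_congr rfl fun T _ => ?_
  rw [chi, chi, ← Finset.prod_mul_distrib]

set_option maxHeartbeats 1000000 in
lemma GL_expectation {n : ℕ} (f : (Fin n → Bool) → ℝ) (I S : Finset (Fin n)) (hS : S ⊆ I) :
    ((Fintype.card (({i // i ∈ Iᶜ} → Bool) × ({i // i ∈ I} → Bool) ×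
        ({i // i ∈ I} → Bool)) : ℝ))⁻¹ *
      ∑ w : ({i // i ∈ Iᶜ} → Bool) × ({i // i ∈ I} → Bool) × ({i // i ∈ I} → Bool),
        f (combine I w.2.1 w.1) * f (combine I w.2.2 w.1) *
          chi S (combine I w.2.1 w.1) * chi S (combine I w.2.2 w.1)
      = ∑ T ∈ Iᶜ.powerset, pbFourier f (S ∪ T) ^ 2 := by
  set Q : (Fin n → Bool) → (Fin n → Bool) → ℝ := fun x x' =>
    f x * f x' * chi S x * chi S x' * ∏ j ∈ Iᶜ, (1 + sgn (x j) * sgn (x' j)) with hQ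
  -- Step A
  have stepA : ∑ T ∈ Iᶜ.powerset, pbFourier f (S ∪ T) ^ 2
      = (((2:ℝ) ^ n)⁻¹) ^ 2 * ∑ x, ∑ x', Q x x' := by
    calc ∑ T ∈ Iᶜ.powerset, pbFourier f (S ∪ T) ^ 2
        = ∑ T ∈ Iᶜ.powerset, (((2:ℝ) ^ n)⁻¹) ^ 2 *
            ∑ x, ∑ x', (f x * chi (S ∪ T) x) * (f x' * chi (S ∪ T) x') := by
          refine Finset.sum_congr rfl fun T _ => ?_
          rw [pbFourier, mul_pow]
          congr 1
          rw [sq, Finset.sum_mul_sum]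
      _ = (((2:ℝ) ^ n)⁻¹) ^ 2 * ∑ x, ∑ x', ∑ T ∈ Iᶜ.powerset,
            (f x * chi (S ∪ T) x) * (f x' * chi (S ∪ T) x') := by
          rw [← Finset.mul_sum]
          congr 1
          rw [Finset.sum_comm]
          exact Finset.sum_congr rfl fun x _ => Finset.sum_comm
      _ = (((2:ℝ) ^ n)⁻¹) ^ 2 * ∑ x, ∑ x', Q x x' := by
          congr 1
          refine Finset.sum_congr rfl fun x _ => Finset.sum_congr rfl fun x' _ => ?_
          have h1 : ∑ T ∈ Iᶜ.powerset, (f x * chi (S ∪ T) x) * (f x' * chi (S ∪ T) x')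
              = f x * f x' * ∑ T ∈ Iᶜ.powerset, chi (S ∪ T) x * chi (S ∪ T) x' := by
            rw [Finset.mul_sum]
            exact Finset.sum_congr rfl fun T _ => by ring
          rw [h1, sum_chi_union hS]
          simp only [hQ]
          ring
  -- Step B : reindex
  have hQc : ∀ (y y' : {i // i ∈ I} → Bool) (z z' : {i // i ∈ Iᶜ} → Bool),
      Q (combine I y z) (combine I y' z')
        = f (combine I y z) * f (combine I y' z') * chi S (combine I y z) *
            chi S (combine I y' z') * (if z = z' then (2:ℝ) ^ Iᶜ.card else 0) := by
    intro y y' z z'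
    simp only [hQ]
    congr 1
    rw [← prod_delta z z', ← Finset.prod_attach Iᶜ
      (fun j => (1 + sgn (combine I y z j) * sgn (combine I y' z' j)))]
    refine Finset.prod_congr rfl fun j _ => ?_
    rw [combine_not_mem y z j.2, combine_not_mem y' z' j.2]
  have stepB : ∑ x, ∑ x', Q x x'
      = (2:ℝ) ^ Iᶜ.card *
          ∑ w : ({i // i ∈ Iᶜ} → Bool) × ({i // i ∈ I} → Bool) × ({i // i ∈ I} → Bool),
            f (combine I w.2.1 w.1) * f (combine I w.2.2 w.1) *
              chi S (combine I w.2.1 w.1) * chi S (combine I w.2.2 w.1) := by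
    calc ∑ x, ∑ x', Q x x'
        = ∑ p : ({i // i ∈ I} → Bool) × ({i // i ∈ Iᶜ} → Bool),
            ∑ p' : ({i // i ∈ I} → Bool) × ({i // i ∈ Iᶜ} → Bool),
              Q (combine I p.1 p.2) (combine I p'.1 p'.2) := by
          rw [← Equiv.sum_comp (cubeEquiv I).symm (fun x => ∑ x', Q x x')]
          refine Finset.sum_congr rfl fun p _ => ?_
          rw [← Equiv.sum_comp (cubeEquiv I).symm
            (fun x' => Q ((cubeEquiv I).symm p) x')]
          rfl
      _ = ∑ y, ∑ z, ∑ y', ∑ z', Q (combine I y z) (combine I y' z') := by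
          rw [Fintype.sum_prod_type]
          exact Finset.sum_congr rfl fun y _ => Finset.sum_congr rfl fun z _ =>
            Fintype.sum_prod_type _
      _ = ∑ y, ∑ z, ∑ y', (f (combine I y z) * f (combine I y' z) *
            chi S (combine I y z) * chi S (combine I y' z) * (2:ℝ) ^ Iᶜ.card) := by
          refine Finset.sum_congr rfl fun y _ => Finset.sum_congr rfl fun z _ =>
            Finset.sum_congr rfl fun y' _ => ?_
          simp only [hQc]
          simp only [mul_ite, mul_zero, Finset.sum_ite_eq, Finset.mem_univ, if_true]
      _ = ∑ z, ∑ y, ∑ y', (f (combine I y z) * f (combine I y' z) *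
            chi S (combine I y z) * chi S (combine I y' z) * (2:ℝ) ^ Iᶜ.card) :=
          Finset.sum_comm
      _ = (2:ℝ) ^ Iᶜ.card * ∑ z, ∑ y, ∑ y', (f (combine I y z) * f (combine I y' z) *
            chi S (combine I y z) * chi S (combine I y' z)) := by
          rw [Finset.mul_sum]
          refine Finset.sum_congr rfl fun z _ => ?_
          rw [Finset.mul_sum]
          refine Finset.sum_congr rfl fun y _ => ?_
          rw [Finset.mul_sum]
          exact Finset.sum_congr rfl fun y' _ => by ring
      _ = _ := by
          congr 1
          rw [Fintype.sum_prod_type]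
          refine Finset.sum_congr rfl fun z _ => ?_
          rw [Fintype.sum_prod_type]
  -- constants
  have hc : I.card + Iᶜ.card = n := by
    rw [Finset.card_add_card_compl]
    exact Fintype.card_fin n
  have hN : (Fintype.card (({i // i ∈ Iᶜ} → Bool) × ({i // i ∈ I} → Bool) ×
      ({i // i ∈ I} → Bool)) : ℝ) = (2:ℝ) ^ (Iᶜ.card + (I.card + I.card)) := by
    simp only [Fintype.card_prod, Fintype.card_fun, Fintype.card_coe, Fintype.card_bool]
    push_cast [pow_add]
    ring
  rw [stepA, stepB, hN, ← mul_assoc]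
  congr 1
  have h2 : ((2:ℝ) ^ (Iᶜ.card + (I.card + I.card))) * ((2:ℝ) ^ Iᶜ.card) = ((2:ℝ) ^ n) ^ 2 := by
    rw [← pow_add, ← pow_mul]
    congr 1
    omega
  rw [inv_pow, ← h2, mul_inv, mul_assoc,
    inv_mul_cancel₀ (by positivity : ((2:ℝ) ^ Iᶜ.card) ≠ 0), mul_one]

/-- Goldreich–Levin estimation theorem: the estimator
`W(z,y,y') = f(y,z)·f(y',z)·χ_S(y)·χ_S(y')` is bounded by `1` in absolute value, its
expectation under the uniform distribution (independent uniform `Z, Y, Y'`) equals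
`Σ_{T ⊆ J} f̂(S ∪ T)²`, and by Hoeffding, with `m ≥ (2/η²)·ln(2/δ)` i.i.d. uniform
samples the empirical mean is within `η` of this sum except with probability `≤ δ`.
(The i.i.d. product of uniform measures on a finite space is the uniform measure on
the product, so probabilities are counting fractions.) -/
theorem goldreich_levin_estimation {n : ℕ} (f : (Fin n → Bool) → ℝ)
    (hf : ∀ x, f x ∈ Set.Icc (-1 : ℝ) 1)
    (I : Finset (Fin n)) (S : Finset (Fin n)) (hS : S ⊆ I)
    (W : ({i // i ∈ Iᶜ} → Bool) → ({i // i ∈ I} → Bool) → ({i // i ∈ I} → Bool) → ℝ)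
    (hW : ∀ z y y', W z y y' =
      f (combine I y z) * f (combine I y' z) *
        (∏ i ∈ S.attach, sgn (y ⟨i.1, hS i.2⟩)) *
        (∏ i ∈ S.attach, sgn (y' ⟨i.1, hS i.2⟩))) :
    -- (i) the estimator is bounded by 1 in absolute value
    (∀ z y y', |W z y y'| ≤ 1) ∧
    -- (ii) its expectation under uniform (Z, Y, Y') is `Σ_{T ⊆ J} f̂(S ∪ T)²`
    ((Fintype.card (({i // i ∈ Iᶜ} → Bool) × ({i // i ∈ I} → Bool) ×
        ({i // i ∈ I} → Bool)) : ℝ)⁻¹ *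
      ∑ w : ({i // i ∈ Iᶜ} → Bool) × ({i // i ∈ I} → Bool) × ({i // i ∈ I} → Bool),
        W w.1 w.2.1 w.2.2
      = ∑ T ∈ Iᶜ.powerset, pbFourier f (S ∪ T) ^ 2) ∧
    -- (iii) Hoeffding bound for m i.i.d. uniform samples
    (∀ (η δ : ℝ), 0 < η → 0 < δ → δ < 1 → ∀ (m : ℕ),
      (2 / η ^ 2) * Real.log (2 / δ) ≤ (m : ℝ) →
      ((Finset.univ.filter
          (fun ω : Fin m → (({i // i ∈ Iᶜ} → Bool) × ({i // i ∈ I} → Bool) ×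
              ({i // i ∈ I} → Bool)) =>
            η ≤ |(m : ℝ)⁻¹ * ∑ k : Fin m, W (ω k).1 (ω k).2.1 (ω k).2.2
              - ∑ T ∈ Iᶜ.powerset, pbFourier f (S ∪ T) ^ 2|)).card : ℝ) /
        (Fintype.card (Fin m → (({i // i ∈ Iᶜ} → Bool) × ({i // i ∈ I} → Bool) ×
            ({i // i ∈ I} → Bool))) : ℝ) ≤ δ) := by
  have part1 : ∀ z y y', |W z y y'| ≤ 1 := by
    intro z y y'
    rw [hW z y y']
    have h1 : |f (combine I y z)| ≤ 1 := abs_le.mpr ⟨(hf _).1, (hf _).2⟩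
    have h2 : |f (combine I y' z)| ≤ 1 := abs_le.mpr ⟨(hf _).1, (hf _).2⟩
    have h3 : |∏ i ∈ S.attach, sgn (y ⟨i.1, hS i.2⟩)| = 1 := by
      rw [Finset.abs_prod]
      exact Finset.prod_eq_one fun i _ => abs_sgn _
    have h4 : |∏ i ∈ S.attach, sgn (y' ⟨i.1, hS i.2⟩)| = 1 := by
      rw [Finset.abs_prod]
      exact Finset.prod_eq_one fun i _ => abs_sgn _
    rw [abs_mul, abs_mul, abs_mul, h3, h4, mul_one, mul_one]
    nlinarith [abs_nonneg (f (combine I y z)), abs_nonneg (f (combine I y' z))]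
  have part2 : ((Fintype.card (({i // i ∈ Iᶜ} → Bool) × ({i // i ∈ I} → Bool) ×
        ({i // i ∈ I} → Bool)) : ℝ)⁻¹ *
      ∑ w : ({i // i ∈ Iᶜ} → Bool) × ({i // i ∈ I} → Bool) × ({i // i ∈ I} → Bool),
        W w.1 w.2.1 w.2.2
      = ∑ T ∈ Iᶜ.powerset, pbFourier f (S ∪ T) ^ 2) := by
    have hsum : ∑ w : ({i // i ∈ Iᶜ} → Bool) × ({i // i ∈ I} → Bool) ×
          ({i // i ∈ I} → Bool), W w.1 w.2.1 w.2.2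
        = ∑ w : ({i // i ∈ Iᶜ} → Bool) × ({i // i ∈ I} → Bool) × ({i // i ∈ I} → Bool),
            f (combine I w.2.1 w.1) * f (combine I w.2.2 w.1) *
              chi S (combine I w.2.1 w.1) * chi S (combine I w.2.2 w.1) := by
      refine Finset.sum_congr rfl fun w _ => ?_
      rw [hW, chiS_combine hS w.2.1 w.1, chiS_combine hS w.2.2 w.1]
    rw [hsum]
    exact GL_expectation f I S hS
  refine ⟨part1, part2, ?_⟩
  intro η δ hη hδ0 hδ1 m hm
  rw [← part2]
  have hg2 : ∀ a : ({i // i ∈ Iᶜ} → Bool) × ({i // i ∈ I} → Bool) × ({i // i ∈ I} → Bool),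
      (W a.1 a.2.1 a.2.2) ^ 2 ≤ 1 := by
    intro a
    have := part1 a.1 a.2.1 a.2.2
    nlinarith [abs_nonneg (W a.1 a.2.1 a.2.2), sq_abs (W a.1 a.2.1 a.2.2)]
  have hH := GL_hoeffding (fun a : ({i // i ∈ Iᶜ} → Bool) × ({i // i ∈ I} → Bool) ×
      ({i // i ∈ I} → Bool) => W a.1 a.2.1 a.2.2) hg2 m hη
  set N : ℝ := (Fintype.card (({i // i ∈ Iᶜ} → Bool) × ({i // i ∈ I} → Bool) ×
      ({i // i ∈ I} → Bool)) : ℝ) with hNdef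
  have hN : (0:ℝ) < N := by positivity
  have hNm : (0:ℝ) < N ^ m := by positivity
  have hcardfun : (Fintype.card (Fin m → (({i // i ∈ Iᶜ} → Bool) × ({i // i ∈ I} → Bool) ×
      ({i // i ∈ I} → Bool))) : ℝ) = N ^ m := by
    rw [hNdef]
    rw [Fintype.card_fun, Fintype.card_fin]
    push_cast
    ring
  rw [hcardfun, div_le_iff₀ hNm]
  have hexp : Real.exp (-(m:ℝ) * η ^ 2 / 2) ≤ δ / 2 := by
    have hη2 : (0:ℝ) < η ^ 2 := by positivity
    have hlog : Real.log (2 / δ) ≤ (m:ℝ) * η ^ 2 / 2 := by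
      have := mul_le_mul_of_nonneg_left hm (le_of_lt (by positivity : (0:ℝ) < η ^ 2 / 2))
      have hcalc : η ^ 2 / 2 * (2 / η ^ 2 * Real.log (2 / δ)) = Real.log (2 / δ) := by
        field_simp
      nlinarith [this, hcalc]
    have h2δ : (0:ℝ) < 2 / δ := by positivity
    calc Real.exp (-(m:ℝ) * η ^ 2 / 2) ≤ Real.exp (-Real.log (2 / δ)) := by
          apply Real.exp_le_exp.mpr
          linarith
      _ = (2 / δ)⁻¹ := by rw [Real.exp_neg, Real.exp_log h2δ]
      _ = δ / 2 := by rw [inv_div]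
  calc ((Finset.univ.filter _).card : ℝ) ≤ 2 * N ^ m * Real.exp (-(m:ℝ) * η ^ 2 / 2) := hH
    _ ≤ 2 * N ^ m * (δ / 2) := by
        apply mul_le_mul_of_nonneg_left hexp
        positivity
    _ = δ * N ^ m := by ring
end

section
/- Fourier spectrum of the multi-tier function: let f : {-1,1}^4 → {-1,1} take the value 1 at x = (x_1, x_2, x_3, x_4) if and only if (x_3 = 1 and x_4 = 1), or x_1 ≥ x_2 ≥ x_3 ≥ x_4, or x_1 ≤ x_2 ≤ x_3 ≤ x_4, and value -1 otherwise. Then f̂({3,4}) = 5/8; |f̂(S)| = 3/8 for S ∈ {{1,2}, {1,4}, {2,3}}; and |f̂(S)| = 1/8 for all twelve remaining subsets S ⊆ {1,2,3,4}, namely ∅, {1}, {2}, {3}, {4}, {1,3}, {2,4}, {1,2,3}, {1,2,4}, {1,3,4}, {2,3,4}, {1,2,3,4}. -/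
open Finset

lemma sgn_le_iff (a b : Bool) : sgn a ≤ sgn b ↔ a ≤ b := by
  cases a <;> cases b <;> simp [sgn] <;> norm_num

lemma sgn_eq_one_iff (a : Bool) : sgn a = 1 ↔ a = true := by
  cases a <;> simp [sgn] <;> norm_num

lemma sum_pi4 (F : (Fin 4 → Bool) → ℝ) :
    ∑ x : Fin 4 → Bool, F x =
      ∑ a : Bool, ∑ b : Bool, ∑ c : Bool, ∑ d : Bool, F ![a, b, c, d] := by
  have hbij : Function.Bijective
      (fun p : Bool × Bool × Bool × Bool => ![p.1, p.2.1, p.2.2.1, p.2.2.2]) := by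
    decide
  rw [← Function.Bijective.sum_comp hbij F]
  simp [Fintype.sum_prod_type]

/-- Fourier spectrum of the multi-tier function: `f(x) = 1` iff `x₃ = x₄ = 1`, or
`x₁ ≥ x₂ ≥ x₃ ≥ x₄`, or `x₁ ≤ x₂ ≤ x₃ ≤ x₄` (and `f = -1` otherwise); its Fourier
coefficient on `{3,4}` is `5/8`, the coefficients on `{1,2}, {1,4}, {2,3}` have absolute
value `3/8`, and all twelve remaining coefficients have absolute value `1/8`.
(Coordinates are 0-indexed: `X_k` is coordinate `k-1`.) -/
theorem multi_tier_fourier_spectrum (f : (Fin 4 → Bool) → ℝ)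
    (hval : ∀ x, f x = 1 ∨ f x = -1)
    (hf : ∀ x, f x = 1 ↔
      ((sgn (x 2) = 1 ∧ sgn (x 3) = 1) ∨
       (sgn (x 1) ≤ sgn (x 0) ∧ sgn (x 2) ≤ sgn (x 1) ∧ sgn (x 3) ≤ sgn (x 2)) ∨
       (sgn (x 0) ≤ sgn (x 1) ∧ sgn (x 1) ≤ sgn (x 2) ∧ sgn (x 2) ≤ sgn (x 3)))) :
    pbFourier f {2, 3} = 5 / 8 ∧
    (∀ S ∈ ({{0, 1}, {0, 3}, {1, 2}} : Finset (Finset (Fin 4))),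
      |pbFourier f S| = 3 / 8) ∧
    (∀ S ∈ ({∅, {0}, {1}, {2}, {3}, {0, 2}, {1, 3}, {0, 1, 2}, {0, 1, 3}, {0, 2, 3},
        {1, 2, 3}, {0, 1, 2, 3}} : Finset (Finset (Fin 4))),
      |pbFourier f S| = 1 / 8) := by

  have hfg : ∀ x, f x = if ((x 2 = true ∧ x 3 = true) ∨
      (x 1 ≤ x 0 ∧ x 2 ≤ x 1 ∧ x 3 ≤ x 2) ∨
      (x 0 ≤ x 1 ∧ x 1 ≤ x 2 ∧ x 2 ≤ x 3)) then (1 : ℝ) else -1 := by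
    intro x
    by_cases h : ((x 2 = true ∧ x 3 = true) ∨
        (x 1 ≤ x 0 ∧ x 2 ≤ x 1 ∧ x 3 ≤ x 2) ∨
        (x 0 ≤ x 1 ∧ x 1 ≤ x 2 ∧ x 2 ≤ x 3))
    · rw [if_pos h, hf x]
      simpa [sgn_eq_one_iff, sgn_le_iff] using h
    · rw [if_neg h]
      rcases hval x with h1 | h1
      · exfalso; apply h
        simpa [sgn_eq_one_iff, sgn_le_iff] using (hf x).1 h1
      · exact h1
  have key : ∀ S : Finset (Fin 4), pbFourier f S =
      (16 : ℝ)⁻¹ * ∑ a : Bool, ∑ b : Bool, ∑ c : Bool, ∑ d : Bool,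
        (if ((c = true ∧ d = true) ∨ (b ≤ a ∧ c ≤ b ∧ d ≤ c) ∨
          (a ≤ b ∧ b ≤ c ∧ c ≤ d)) then (1 : ℝ) else -1) * chi S ![a, b, c, d] := by
    intro S
    rw [pbFourier, sum_pi4]
    congr 1
    · norm_num
    refine Finset.sum_congr rfl fun a _ => Finset.sum_congr rfl fun b _ =>
      Finset.sum_congr rfl fun c _ => Finset.sum_congr rfl fun d _ => ?_
    rw [hfg]
    simp [Matrix.cons_val_zero, Matrix.cons_val_one]
    cases a <;> cases b <;> cases c <;> cases d <;> simp +decide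
  have h1 : ¬((true : Bool) ≤ false) := by decide
  refine ⟨?_, ?_, ?_⟩
  · rw [key]
    simp only [Fintype.sum_bool]
    simp [chi, sgn, h1]
    norm_num
  · intro S hS
    fin_cases hS <;> rw [key] <;> simp only [Fintype.sum_bool] <;>
      simp [chi, sgn, h1] <;> norm_num
  · intro S hS
    fin_cases hS <;> rw [key] <;> simp only [Fintype.sum_bool] <;>
      simp [chi, sgn, h1] <;> norm_num
end
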